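/- arXiv:2311.18639 — 2 statements merged into one kernel-verified Lean document; each statement's English description precedes it below -/
import Mathlib

section
/- In the setting of the previous covariance computation, if additionally α τ̄₁ = A_{0Ω}ᵀ(I-A₀₀)^{-⊤}τ̄₀ for a scalar α, then the conditional variance of Y given Z₁ equals τ̄₀ᵀ(I-A₀₀)^{-1} Σ_{π(0)} (I-A₀₀)^{-⊤} τ̄₀, i.e. it is independent of the intervention i and depends only on the exogenous noise feeding π(0). -/
/-!
Under the hypothesis, the part of `Y` driven by the noise of `Ω` is `α` times `Z₁`
(both are read off through `(I - A_ΩΩ)⁻ᵀ τ̄₁`), so `Var(Y) = v₀ + α² Var(Z₁)` and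
`Cov(Y, Z₁) = α Var(Z₁)`, where `v₀` is the contribution of the noise feeding `π(0)`.
Regressing `Y` on `Z₁` removes exactly `α² Var(Z₁)`.
-/

open Matrix

theorem add_sq_mul_sub_sq_mul_div_self {K : Type*} [Field K] (v a z : K) :
    v + a ^ 2 * z - (a * z) ^ 2 / z = v := by
  rcases eq_or_ne z 0 with rfl | hz
  · simp
  · field_simp
    ring

section

variable {k m n R : Type*} [Fintype k] [Fintype m] [Fintype n] [CommRing R]

theorem dotProduct_mul_mul_transpose_mulVec (B : Matrix m n R) (S : Matrix n n R)
    (C : Matrix k n R) (x : m → R) (y : k → R) :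
    x ⬝ᵥ (B * S * Cᵀ) *ᵥ y = (Bᵀ *ᵥ x) ⬝ᵥ S *ᵥ (Cᵀ *ᵥ y) := by
  rw [← mulVec_mulVec, ← mulVec_mulVec, dotProduct_mulVec, mulVec_transpose B]

theorem smul_dotProduct_mulVec_smul (S : Matrix n n R) (a : R) (u : n → R) :
    (a • u) ⬝ᵥ S *ᵥ (a • u) = a ^ 2 * (u ⬝ᵥ S *ᵥ u) := by
  rw [mulVec_smul, smul_dotProduct, dotProduct_smul, smul_eq_mul, smul_eq_mul]
  ring

end

theorem tcr_conditional_variance_general {N0 N1 : ℕ}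
    (A00 : Matrix (Fin N0) (Fin N0) ℝ) (A0O : Matrix (Fin N0) (Fin N1) ℝ)
    (AOO : Matrix (Fin N1) (Fin N1) ℝ)
    (S0 : Matrix (Fin N0) (Fin N0) ℝ) (SO : Matrix (Fin N1) (Fin N1) ℝ)
    (τb0 : Fin N0 → ℝ) (τb1 : Fin N1 → ℝ) (α : ℝ)
    (hα : A0Oᵀ.mulVec ((((1 - A00)⁻¹)ᵀ).mulVec τb0) = α • τb1)
    -- Var(Y), Var(Z₁) and Cov(Y, Z₁) of the Gaussian vector (Y, Z₁):
    (vY vZ c : ℝ)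
    (hvY : vY = τb0 ⬝ᵥ ((1 - A00)⁻¹ * S0 * ((1 - A00)⁻¹)ᵀ).mulVec τb0 +
      ((((1 - A00)⁻¹ * A0O * (1 - AOO)⁻¹)ᵀ).mulVec τb0) ⬝ᵥ
        SO.mulVec ((((1 - A00)⁻¹ * A0O * (1 - AOO)⁻¹)ᵀ).mulVec τb0))
    (hvZ : vZ = ((((1 - AOO)⁻¹)ᵀ).mulVec τb1) ⬝ᵥ SO.mulVec ((((1 - AOO)⁻¹)ᵀ).mulVec τb1))
    (hc : c = τb0 ⬝ᵥ ((1 - A00)⁻¹ * A0O * (1 - AOO)⁻¹ * SO * ((1 - AOO)⁻¹)ᵀ).mulVec τb1) :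
    vY - c ^ 2 / vZ = τb0 ⬝ᵥ ((1 - A00)⁻¹ * S0 * ((1 - A00)⁻¹)ᵀ).mulVec τb0 := by
  have hΩ : ((1 - A00)⁻¹ * A0O * (1 - AOO)⁻¹)ᵀ *ᵥ τb0 = α • (((1 - AOO)⁻¹)ᵀ *ᵥ τb1) := by
    rw [transpose_mul, transpose_mul, ← mulVec_mulVec, ← mulVec_mulVec, hα, mulVec_smul]
  have hvY' : vY = τb0 ⬝ᵥ ((1 - A00)⁻¹ * S0 * ((1 - A00)⁻¹)ᵀ) *ᵥ τb0 + α ^ 2 * vZ := by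
    rw [hvY, hΩ, smul_dotProduct_mulVec_smul, hvZ]
  have hc' : c = α * vZ := by
    rw [hc, dotProduct_mul_mul_transpose_mulVec, hΩ, smul_dotProduct, hvZ, smul_eq_mul]
  rw [hvY', hc', add_sq_mul_sub_sq_mul_div_self]

/-- Conditional variance of the target given the learned cause: in the block-triangular
linear Gaussian SCM, if `A₀Ωᵀ (I-A₀₀)⁻ᵀ τ̄₀ = α τ̄₁` for a scalar `α`, then
`Var(Y | Z₁) = Var(Y) - Cov(Y,Z₁)²/Var(Z₁)` equals
`τ̄₀ᵀ (I-A₀₀)⁻¹ Σ_{π(0)} (I-A₀₀)⁻ᵀ τ̄₀`, independently of the intervention: it depends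
only on the exogenous noise feeding `π(0)`. -/
theorem tcr_conditional_variance {N0 N1 : ℕ}
    (A00 : Matrix (Fin N0) (Fin N0) ℝ) (A0O : Matrix (Fin N0) (Fin N1) ℝ)
    (AOO : Matrix (Fin N1) (Fin N1) ℝ)
    (S0 : Matrix (Fin N0) (Fin N0) ℝ) (SO : Matrix (Fin N1) (Fin N1) ℝ)
    (τb0 : Fin N0 → ℝ) (τb1 : Fin N1 → ℝ) (α : ℝ)
    (hα : A0Oᵀ.mulVec ((((1 - A00)⁻¹)ᵀ).mulVec τb0) = α • τb1)
    -- Var(Y), Var(Z₁) and Cov(Y, Z₁) of the Gaussian vector (Y, Z₁):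
    (vY vZ c : ℝ)
    (hvY : vY = τb0 ⬝ᵥ ((1 - A00)⁻¹ * S0 * ((1 - A00)⁻¹)ᵀ).mulVec τb0 +
      ((((1 - A00)⁻¹ * A0O * (1 - AOO)⁻¹)ᵀ).mulVec τb0) ⬝ᵥ
        SO.mulVec ((((1 - A00)⁻¹ * A0O * (1 - AOO)⁻¹)ᵀ).mulVec τb0))
    (hvZ : vZ = ((((1 - AOO)⁻¹)ᵀ).mulVec τb1) ⬝ᵥ SO.mulVec ((((1 - AOO)⁻¹)ᵀ).mulVec τb1))
    (hc : c = τb0 ⬝ᵥ ((1 - A00)⁻¹ * A0O * (1 - AOO)⁻¹ * SO * ((1 - AOO)⁻¹)ᵀ).mulVec τb1)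
    (hvZ_pos : 0 < vZ) :
    vY - c ^ 2 / vZ = τb0 ⬝ᵥ ((1 - A00)⁻¹ * S0 * ((1 - A00)⁻¹)ᵀ).mulVec τb0 :=
  tcr_conditional_variance_general A00 A0O AOO S0 SO τb0 τb1 α hα vY vZ c hvY hvZ hc
end

section
/- Non-identifiability with unintervened mediators: consider the linear chain SCM X₁ → X₂ → X₃ → X₄ = Y with unit coefficients and independent nondegenerate Gaussian noise, where shift interventions act only on X₁ and X₂ (i₃ = i₄ = 0). Then there exist two distinct (not proportional) linear reductions (τ, ω) achieving exact interventional consistency: one with τ₁ proportional to the indicator of X₃ and one with τ₁ proportional to the indicator of X₂, each with suitable ω putting weight only on intervened nodes; hence the 1-cause TCR is not unique up to scaling. -/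
/-!
Every node `X_k` with `k ≥ 2` lies downstream of both intervened nodes, so it is shifted by
exactly `i₁ + i₂`, and `Y - X_k` is a sum of noises strictly downstream of `X_k`, hence
independent of it. The indicator of any such node is therefore an exact reduction with
`α = 1`, `β = 0`, `ω = (1, 1)`, and indicators of different nodes are not proportional.
-/

open Matrix Finset

/-- Solution of the chain SCM `X₁ → X₂ → X₃ → X₄` with unit coefficients, where shift
interventions `i = (i₁, i₂)` act only on `X₁` and `X₂`. -/
def chainX (U : Fin 4 → ℝ) (i : Fin 2 → ℝ) : Fin 4 → ℝ := fun k =>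
  match k with
  | 0 => U 0 + i 0
  | 1 => U 0 + i 0 + U 1 + i 1
  | 2 => U 0 + i 0 + U 1 + i 1 + U 2
  | 3 => U 0 + i 0 + U 1 + i 1 + U 2 + U 3

/-- Target `Y = X₄`. -/
def chainY (U : Fin 4 → ℝ) (i : Fin 2 → ℝ) : ℝ := chainX U i 3

/-- Exact interventional consistency of a linear reduction `(τ, ω)` for the chain SCM
with independent Gaussian noise `U_k ~ N(0, σ_k²)`: the high-level cause
`Z₁ = τᵀ X` is shifted by exactly `ωᵀ i` under every intervention `i`; the target
satisfies the unintervened high-level mechanism `Y = α Z₁ + β + R₀` for all `U, i`,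
where the exogenous residual `R₀(U) = Y(U,0) - α Z₁(U,0) - β` does not depend on `i`;
and `R₀` is independent of `Z₁` (for jointly Gaussian variables: zero covariance,
expressed through the linear coefficients extracted on the standard basis). -/
def ExactReduction (σ : Fin 4 → ℝ) (τ : Fin 4 → ℝ) (ω : Fin 2 → ℝ) : Prop :=
  ∃ α β : ℝ,
    (∀ (U : Fin 4 → ℝ) (i : Fin 2 → ℝ),
      τ ⬝ᵥ chainX U i = τ ⬝ᵥ chainX U 0 + ω ⬝ᵥ i) ∧
    (∀ (U : Fin 4 → ℝ) (i : Fin 2 → ℝ),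
      chainY U i = α * (τ ⬝ᵥ chainX U i) + β
        + (chainY U 0 - α * (τ ⬝ᵥ chainX U 0) - β)) ∧
    (∑ k : Fin 4, σ k ^ 2 *
        ((chainY (Pi.single k 1) 0 - α * (τ ⬝ᵥ chainX (Pi.single k 1) 0))
          - (chainY 0 0 - α * (τ ⬝ᵥ chainX 0 0))) *
        ((τ ⬝ᵥ chainX (Pi.single k 1) 0) - τ ⬝ᵥ chainX 0 0)) = 0

lemma chainX_zero_zero : chainX 0 0 = 0 := by
  ext k
  fin_cases k <;> simp [chainX]

lemma chainX_apply_eq_add_dotProduct (U : Fin 4 → ℝ) (i : Fin 2 → ℝ) {k : Fin 4}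
    (hk : k ≠ 0) : chainX U i k = chainX U 0 k + ![1, 1] ⬝ᵥ i := by
  fin_cases k <;> simp_all [chainX, dotProduct] <;> ring

/-- The basis noise `e_m` reaches `X_k` only if `m ≤ k`, and then it reaches `Y` with the
same unit weight, so it never contributes to both `X_k` and the residual `Y - X_k`. -/
lemma residual_mul_chainX_single (k m : Fin 4) :
    (chainY (Pi.single m 1) 0 - chainX (Pi.single m 1) 0 k) *
      chainX (Pi.single m 1) 0 k = 0 := by
  fin_cases k <;> fin_cases m <;> simp [chainX, chainY]

theorem exactReduction_single_of_ne_zero (σ : Fin 4 → ℝ) {k : Fin 4} (hk : k ≠ 0) :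
    ExactReduction σ (Pi.single k 1) ![1, 1] := by
  have hY : ∀ U i, chainY U i = chainY U 0 + ![1, 1] ⬝ᵥ i := fun U i =>
    chainX_apply_eq_add_dotProduct U i (k := 3) (by decide)
  refine ⟨1, 0, fun U i => ?_, fun U i => ?_, ?_⟩
  · simp only [single_one_dotProduct, chainX_apply_eq_add_dotProduct U i hk]
  · simp only [single_one_dotProduct, chainX_apply_eq_add_dotProduct U i hk, hY U i]
    ring
  · refine Finset.sum_eq_zero fun m _ => ?_
    have hY₀ : chainY 0 0 = 0 := by simp [chainY, chainX_zero_zero]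
    simp only [single_one_dotProduct, one_mul, chainX_zero_zero, hY₀, Pi.zero_apply, sub_zero,
      mul_assoc, residual_mul_chainX_single, mul_zero]

lemma Pi.single_one_ne_smul_single {ι R : Type*} [DecidableEq ι] [Semiring R] [Nontrivial R]
    {j k : ι} (h : j ≠ k) : ¬∃ d : R, Pi.single j 1 = d • Pi.single k (1 : R) := by
  rintro ⟨d, hd⟩
  simpa [Pi.single_eq_of_ne h] using congrFun hd j

theorem tcr_not_identifiable_with_unintervened_mediators_general
    (σ : Fin 4 → ℝ) :
    ∃ (τ τ' : Fin 4 → ℝ) (ω ω' : Fin 2 → ℝ) (c c' : ℝ),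
      c ≠ 0 ∧ c' ≠ 0 ∧
      τ = c • (Pi.single (2 : Fin 4) (1 : ℝ) : Fin 4 → ℝ) ∧
      τ' = c' • (Pi.single (1 : Fin 4) (1 : ℝ) : Fin 4 → ℝ) ∧
      ExactReduction σ τ ω ∧ ExactReduction σ τ' ω' ∧
      (¬∃ d : ℝ, τ' = d • τ) ∧ (¬∃ d : ℝ, τ = d • τ') :=
  ⟨Pi.single 2 1, Pi.single 1 1, ![1, 1], ![1, 1], 1, 1, one_ne_zero, one_ne_zero,
    (one_smul _ _).symm, (one_smul _ _).symm,
    exactReduction_single_of_ne_zero σ (by decide), exactReduction_single_of_ne_zero σ (by decide),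
    Pi.single_one_ne_smul_single (by decide), Pi.single_one_ne_smul_single (by decide)⟩

/-- Non-identifiability with unintervened mediators: for the unit chain
`X₁ → X₂ → X₃ → X₄ = Y` with nondegenerate independent Gaussian noise and interventions
acting only on `X₁, X₂`, there exist two exactly consistent linear reductions that are
not proportional: one with `τ₁` proportional to the indicator of `X₃` and one with `τ₁`
proportional to the indicator of `X₂`. Hence the 1-cause TCR is not unique up to
scaling. -/
theorem tcr_not_identifiable_with_unintervened_mediators
    (σ : Fin 4 → ℝ) (hσ : ∀ k, 0 < σ k) :
    ∃ (τ τ' : Fin 4 → ℝ) (ω ω' : Fin 2 → ℝ) (c c' : ℝ),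
      c ≠ 0 ∧ c' ≠ 0 ∧
      τ = c • (Pi.single (2 : Fin 4) (1 : ℝ) : Fin 4 → ℝ) ∧
      τ' = c' • (Pi.single (1 : Fin 4) (1 : ℝ) : Fin 4 → ℝ) ∧
      ExactReduction σ τ ω ∧ ExactReduction σ τ' ω' ∧
      (¬∃ d : ℝ, τ' = d • τ) ∧ (¬∃ d : ℝ, τ = d • τ') :=
  tcr_not_identifiable_with_unintervened_mediators_general σ
end
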